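/- Linear rate transfer (strongly convex case): under the assumptions that f is (1/β)-smooth, g is μ-strongly convex (μ>0), σ := ‖A‖², and an algorithm produces iterates with E[D(α^t) - D(α⋆)] ≤ (1-C)^t · D₀ for some C ∈ (0,1], D₀ ≥ 0, it holds for every t ≥ (1/C)·log( D₀(σ/β + μ)/(μ ε) ) that E[G(α^t)] ≤ ε. -/

import Mathlib

open scoped BigOperators ENNReal
open MeasureTheory

noncomputable section

abbrev Euc (n : ℕ) := EuclideanSpace ℝ (Fin n)

/-- `N` is a norm on `ℝ^n`. -/
def IsNorm {n : ℕ} (N : Euc n → ℝ) : Prop :=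
  (∀ x, 0 ≤ N x) ∧ (∀ x, N x = 0 ↔ x = 0) ∧
  (∀ (c : ℝ) (x), N (c • x) = |c| * N x) ∧
  (∀ x y, N (x + y) ≤ N x + N y)

/-- The dual norm `‖v‖_* = sup_{N u ≤ 1} ⟨v,u⟩`. -/
noncomputable def dualNorm {n : ℕ} (N : Euc n → ℝ) (v : Euc n) : ℝ :=
  sSup {r : ℝ | ∃ u, N u ≤ 1 ∧ r = (inner ℝ v u : ℝ)}

/-- Convex (Fenchel) conjugate of an `ℝ ∪ {+∞}`-valued function. -/
noncomputable def econj {n : ℕ} (g : Euc n → EReal) (v : Euc n) : EReal :=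
  ⨆ u : Euc n, ((inner ℝ v u : ℝ) : EReal) - g u

/-- Properness: never `-∞`, finite somewhere. -/
def EProper {n : ℕ} (g : Euc n → EReal) : Prop :=
  (∀ x, g x ≠ ⊥) ∧ ∃ x, g x ≠ ⊤

/-- Convexity of an extended-real-valued function. -/
def EConvex {n : ℕ} (g : Euc n → EReal) : Prop :=
  ∀ x y (a b : ℝ), 0 ≤ a → 0 ≤ b → a + b = 1 →
    g (a • x + b • y) ≤ (a : EReal) * g x + (b : EReal) * g y

/-- `u` is a subgradient of `g` at `x`. -/
def ESubgradAt {n : ℕ} (g : Euc n → EReal) (x u : Euc n) : Prop :=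
  ∀ y, g x + ((inner ℝ u (y - x) : ℝ) : EReal) ≤ g y

/-- `u` is a subgradient of a real-valued `f` at `x`. -/
def RSubgradAt {n : ℕ} (f : Euc n → ℝ) (x u : Euc n) : Prop :=
  ∀ y, f x + (inner ℝ u (y - x) : ℝ) ≤ f y

/-- One-dimensional convex conjugate. -/
noncomputable def econj1 (g : ℝ → EReal) (x : ℝ) : EReal :=
  ⨆ a : ℝ, ((x * a : ℝ) : EReal) - g a

def EProper1 (g : ℝ → EReal) : Prop := (∀ x, g x ≠ ⊥) ∧ ∃ x, g x ≠ ⊤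

def EConvex1 (g : ℝ → EReal) : Prop :=
  ∀ x y (a b : ℝ), 0 ≤ a → 0 ≤ b → a + b = 1 →
    g (a * x + b * y) ≤ (a : EReal) * g x + (b : EReal) * g y

def ESubgradAt1 (g : ℝ → EReal) (x u : ℝ) : Prop :=
  ∀ y, g x + ((u * (y - x) : ℝ) : EReal) ≤ g y

/-- Map a nonnegative extended real to `ℝ≥0∞` (junk on negatives). -/
noncomputable def toe (x : EReal) : ℝ≥0∞ :=
  if x = ⊤ then ⊤ else ENNReal.ofReal x.toReal


/-! At a minimizer `α⋆`, first-order optimality makes `v⋆ = -Aᵀ∇f(Aα⋆)` a subgradient of `g`, so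
strong convexity gives the quadratic minorant `g ≥ g(α⋆) + ⟪v⋆, · - α⋆⟫ + μ/2 ‖· - α⋆‖²`. This
minorant together with the cocoercivity of `∇f` bounds `g*(-Aᵀ∇f(Aα))` from above, and it bounds
`D(α) - D(α⋆)` from below; combined with the `(1/β)`-smoothness of `f` this yields the pointwise
bound `G(α) ≤ (1 + σ/(βμ)) (D(α) - D(α⋆))`. Integrating and using `(1 - C)^t ≤ e^{-Ct}` gives
the claim. -/

open Set Filter Topology
open scoped RealInnerProductSpace

section Smooth

variable {E : Type*} [NormedAddCommGroup E] [InnerProductSpace ℝ E] [CompleteSpace E]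

def bregman (f : E → ℝ) (f' : E → E) (x y : E) : ℝ := f x - f y - ⟪f' y, x - y⟫

theorem ConvexOn.add_inner_le_of_hasGradientAt {f : E → ℝ} (hf : ConvexOn ℝ univ f) {x g : E}
    (hg : HasGradientAt f g x) (y : E) : f x + ⟪g, y - x⟫ ≤ f y := by
  set ℓ : ℝ →ᵃ[ℝ] E := AffineMap.lineMap x y
  have hφ : ConvexOn ℝ univ (f ∘ ℓ) := by simpa using hf.comp_affineMap ℓ
  have hd : HasDerivAt (f ∘ ℓ) ⟪g, y - x⟫ 0 := by
    have hl : HasDerivAt ℓ (y - x) 0 := AffineMap.hasDerivAt_lineMap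
    exact hg.hasFDerivAt.comp_hasDerivAt_of_eq 0 hl (by simp [ℓ])
  have := hφ.le_slope_of_hasDerivAt (mem_univ 0) (mem_univ 1) zero_lt_one hd
  simp [slope, ℓ] at this
  linarith

theorem bregman_nonneg {f : E → ℝ} (hf : ConvexOn ℝ univ f) {f' : E → E}
    (hf' : ∀ x, HasGradientAt f (f' x) x) (x y : E) : 0 ≤ bregman f f' x y := by
  have := hf.add_inner_le_of_hasGradientAt (hf' y) x
  unfold bregman; linarith

/-- Cocoercivity of the gradient of a convex `(1/β)`-smooth function, in a form free of dual
norms. -/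
theorem sq_inner_sub_le_bregman {f : E → ℝ} (hf : ConvexOn ℝ univ f) {f' : E → E}
    (hf' : ∀ x, HasGradientAt f (f' x) x) {N : E → ℝ} (hN : ∀ (c : ℝ) z, N (c • z) = |c| * N z)
    {β : ℝ} (hsmooth : ∀ x y, f y ≤ f x + ⟪f' x, y - x⟫ + 1 / (2 * β) * N (y - x) ^ 2)
    (x y z : E) : ⟪f' x - f' y, z⟫ ^ 2 ≤ 2 / β * bregman f f' x y * N z ^ 2 := by
  have hquad : ∀ t : ℝ, 0 ≤ (N z ^ 2 / (2 * β)) * (t * t) + ⟪f' x - f' y, z⟫ * t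
      + bregman f f' x y := by
    intro t
    have hlow := hf.add_inner_le_of_hasGradientAt (hf' y) (x + t • z)
    have hup := hsmooth x (x + t • z)
    have hNt : N (t • z) ^ 2 = t ^ 2 * N z ^ 2 := by rw [hN, mul_pow, sq_abs]
    rw [add_sub_cancel_left, hNt, inner_smul_right] at hup
    rw [show x + t • z - y = (x - y) + t • z by abel, inner_add_right, inner_smul_right] at hlow
    rw [inner_sub_left, bregman]
    linarith [show 1 / (2 * β) * (t ^ 2 * N z ^ 2) = N z ^ 2 / (2 * β) * (t * t) by ring]
  have := discrim_le_zero hquad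
  rw [discrim] at this
  linarith [show 4 * (N z ^ 2 / (2 * β)) * bregman f f' x y = 2 / β * bregman f f' x y * N z ^ 2
    by ring]

end Smooth

theorem le_half_mul_sq_add_of_sq_le {s K b μ : ℝ} (hK : 0 ≤ K) (hμ : 0 < μ)
    (h : s ^ 2 ≤ K * b ^ 2) : s ≤ μ / 2 * b ^ 2 + K / (2 * μ) := by
  have key : 2 * μ * s ≤ μ ^ 2 * b ^ 2 + K := by
    by_contra! hlt
    have hsq := mul_self_lt_mul_self (by positivity) hlt
    nlinarith [sq_nonneg (μ ^ 2 * b ^ 2 - K), mul_le_mul_of_nonneg_left h (sq_nonneg (2 * μ))]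
  rw [show μ / 2 * b ^ 2 + K / (2 * μ) = (μ ^ 2 * b ^ 2 + K) / (2 * μ) by field_simp]
  rw [le_div_iff₀ (by positivity)]
  linarith

theorem le_of_forall_le_add_mul {a b c : ℝ} (h : ∀ s ∈ Ioc (0 : ℝ) 1, a ≤ b + s * c) : a ≤ b := by
  have hlim : Tendsto (fun s => b + s * c) (𝓝[>] 0) (𝓝 b) := by
    have hc : Continuous fun s : ℝ => b + s * c := by fun_prop
    simpa using (hc.tendsto 0).mono_left nhdsWithin_le_nhds
  exact ge_of_tendsto hlim (by filter_upwards [Ioc_mem_nhdsGT zero_lt_one] with s hs using h s hs)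

theorem one_sub_pow_mul_le_of_log_div_le {C D ε : ℝ} {t : ℕ} (hC0 : 0 < C) (hC1 : C ≤ 1)
    (hε : 0 < ε) (ht : 1 / C * Real.log (D / ε) ≤ t) : (1 - C) ^ t * D ≤ ε := by
  rcases le_or_gt D 0 with hD | hD
  · exact (mul_nonpos_of_nonneg_of_nonpos (pow_nonneg (by linarith) t) hD).trans hε.le
  have hlog : Real.log (D / ε) ≤ C * t := by
    rwa [div_mul_eq_mul_div, one_mul, div_le_iff₀' hC0] at ht
  have hpow : (1 - C) ^ t ≤ Real.exp (-(C * t)) := by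
    calc (1 - C) ^ t ≤ Real.exp (-C) ^ t :=
          pow_le_pow_left₀ (by linarith) (by linarith [Real.add_one_le_exp (-C)]) t
      _ = Real.exp (-(C * t)) := by rw [← Real.exp_nat_mul]; ring_nf
  calc (1 - C) ^ t * D ≤ Real.exp (-Real.log (D / ε)) * D := by
        gcongr
        exact hpow.trans (Real.exp_le_exp.2 (by linarith))
    _ = ε := by
        rw [Real.exp_neg, Real.exp_log (by positivity)]
        field_simp

section Composite

variable {d n : ℕ}

def objective (A : Euc n →L[ℝ] Euc d) (f : Euc d → ℝ) (g : Euc n → EReal) (α : Euc n) : EReal :=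
  (f (A α) : EReal) + g α

/-- The duality gap at `α` for the dual point `w = ∇f(Aα)`, where the Fenchel–Young equality
`f(Aα) + f*(w) = ⟪w, Aα⟫` has been used to eliminate `f*`. -/
def dualityGap (A : Euc n →L[ℝ] Euc d) (f' : Euc d → Euc d) (g : Euc n → EReal) (α : Euc n) :
    EReal :=
  econj g (-(ContinuousLinearMap.adjoint A) (f' (A α))) + g α + (⟪f' (A α), A α⟫ : ℝ)

theorem EProper.exists_coe_eq {g : Euc n → EReal} (hg : EProper g) {x : Euc n} (hx : g x ≠ ⊤) :
    ∃ r : ℝ, g x = r :=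
  ⟨_, (EReal.coe_toReal hx (hg.1 x)).symm⟩

theorem EProper.ne_top_of_isMinimizer {g : Euc n → EReal} (hg : EProper g) {F : Euc n → ℝ}
    {x : Euc n} (hmin : ∀ y, (F x : EReal) + g x ≤ (F y : EReal) + g y) : g x ≠ ⊤ := by
  obtain ⟨y, hy⟩ := hg.2
  obtain ⟨r, hr⟩ := hg.exists_coe_eq hy
  intro hx
  have := hmin y
  rw [hx, hr, EReal.coe_add_top, ← EReal.coe_add] at this
  exact EReal.coe_ne_top _ (top_le_iff.1 this)

theorem esubgradAt_neg_of_isMinimizer {g : Euc n → EReal} (hg : EProper g) (hgc : EConvex g)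
    {F : Euc n → ℝ} {x u : Euc n} {K : Euc n → ℝ}
    (hmin : ∀ y, (F x : EReal) + g x ≤ (F y : EReal) + g y)
    (hF : ∀ e (s : ℝ), F (x + s • e) ≤ F x + s * ⟪u, e⟫ + s ^ 2 * K e) :
    ESubgradAt g x (-u) := by
  obtain ⟨gx, hgx⟩ := hg.exists_coe_eq (hg.ne_top_of_isMinimizer hmin)
  intro y
  by_cases hy : g y = ⊤
  · simp [hy]
  obtain ⟨gy, hgy⟩ := hg.exists_coe_eq hy
  rw [hgx, hgy, ← EReal.coe_add, EReal.coe_le_coe_iff, inner_neg_left]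
  suffices gx ≤ gy + ⟪u, y - x⟫ by linarith
  refine le_of_forall_le_add_mul (c := K (y - x)) fun s hs => ?_
  have hconv := hgc x y (1 - s) s (by linarith [hs.2]) hs.1.le (by ring)
  have hmin' := hmin ((1 - s) • x + s • y)
  rw [show (1 - s) • x + s • y = x + s • (y - x) by module] at hconv hmin'
  rw [hgx, hgy, ← EReal.coe_mul, ← EReal.coe_mul, ← EReal.coe_add] at hconv
  have hreal := hmin'.trans (add_le_add_right hconv _)
  rw [hgx, ← EReal.coe_add, ← EReal.coe_add, EReal.coe_le_coe_iff] at hreal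
  have hF' := hF (y - x) s
  have : s * gx ≤ s * (gy + ⟪u, y - x⟫ + s * K (y - x)) := by nlinarith
  exact le_of_mul_le_mul_left this hs.1

theorem econj_le_of_quadratic_minorant {g : Euc n → EReal} {N : Euc n → ℝ} {μ K gx : ℝ}
    {x v₀ v : Euc n} (hμ : 0 < μ) (hK : 0 ≤ K) (hgx : g x = gx)
    (hsc : ∀ u, g x + ((⟪v₀, u - x⟫ + μ / 2 * N (u - x) ^ 2 : ℝ) : EReal) ≤ g u)
    (hv : ∀ e, ⟪v - v₀, e⟫ ^ 2 ≤ K * N e ^ 2) :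
    econj g v ≤ ((⟪v, x⟫ - gx + K / (2 * μ) : ℝ) : EReal) := by
  refine iSup_le fun u => ?_
  have hu := hsc u
  rw [hgx, ← EReal.coe_add] at hu
  by_cases hut : g u = ⊤
  · simp [hut]
  obtain ⟨gu, hgu⟩ : ∃ r : ℝ, g u = r :=
    ⟨_, (EReal.coe_toReal hut (ne_bot_of_le_ne_bot (EReal.coe_ne_bot _) hu)).symm⟩
  rw [hgu, EReal.coe_le_coe_iff] at hu
  rw [hgu, ← EReal.coe_sub, EReal.coe_le_coe_iff]
  have hamgm := le_half_mul_sq_add_of_sq_le hK hμ (hv (u - x))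
  have hsplit : ⟪v, u⟫ - ⟪v, x⟫ = ⟪v - v₀, u - x⟫ + ⟪v₀, u - x⟫ := by
    rw [← inner_sub_right, inner_sub_left]; ring
  linarith

theorem sq_inner_adjoint_sub_le_bregman {A : Euc n →L[ℝ] Euc d} {Nf : Euc d → ℝ}
    (hNf : ∀ (c : ℝ) z, Nf (c • z) = |c| * Nf z) {Ng : Euc n → ℝ}
    {f : Euc d → ℝ} (hfc : ConvexOn ℝ univ f) {f' : Euc d → Euc d}
    (hf' : ∀ x, HasGradientAt f (f' x) x) {β : ℝ} (hβ : 0 < β)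
    (hsmooth : ∀ x y, f y ≤ f x + ⟪f' x, y - x⟫ + 1 / (2 * β) * Nf (y - x) ^ 2)
    {σ : ℝ} (hσA : ∀ x, Nf (A x) ^ 2 ≤ σ * Ng x ^ 2) (x y : Euc d) (e : Euc n) :
    ⟪(ContinuousLinearMap.adjoint A) (f' x - f' y), e⟫ ^ 2
      ≤ 2 * σ * bregman f f' x y / β * Ng e ^ 2 := by
  have := bregman_nonneg hfc hf' x y
  calc _ = ⟪f' x - f' y, A e⟫ ^ 2 := by rw [ContinuousLinearMap.adjoint_inner_left]
    _ ≤ 2 / β * bregman f f' x y * Nf (A e) ^ 2 := sq_inner_sub_le_bregman hfc hf' hNf hsmooth _ _ _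
    _ ≤ 2 / β * bregman f f' x y * (σ * Ng e ^ 2) := by gcongr; exact hσA e
    _ = 2 * σ * bregman f f' x y / β * Ng e ^ 2 := by ring

theorem dualityGap_le {A : Euc n →L[ℝ] Euc d} {Nf : Euc d → ℝ}
    (hNf : ∀ (c : ℝ) z, Nf (c • z) = |c| * Nf z) {Ng : Euc n → ℝ}
    {f : Euc d → ℝ} (hfc : ConvexOn ℝ univ f) {f' : Euc d → Euc d}
    (hf' : ∀ x, HasGradientAt f (f' x) x) {β : ℝ} (hβ : 0 < β)
    (hsmooth : ∀ x y, f y ≤ f x + ⟪f' x, y - x⟫ + 1 / (2 * β) * Nf (y - x) ^ 2)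
    {g : Euc n → EReal} {μ : ℝ} (hμ : 0 < μ) {σ : ℝ} (hσ0 : 0 ≤ σ)
    (hσA : ∀ x, Nf (A x) ^ 2 ≤ σ * Ng x ^ 2) {αstar : Euc n} {gs : ℝ} (hgs : g αstar = gs)
    (hsc : ∀ u, g αstar + ((⟪-(ContinuousLinearMap.adjoint A) (f' (A αstar)), u - αstar⟫
        + μ / 2 * Ng (u - αstar) ^ 2 : ℝ) : EReal) ≤ g u)
    {α : Euc n} {ga : ℝ} (hga : g α = ga) :
    dualityGap A f' g α ≤
      (((1 + σ / (β * μ)) * (f (A α) + ga - (f (A αstar) + gs)) : ℝ) : EReal) := by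
  set w := f' (A α)
  set ws := f' (A αstar)
  set Df := bregman f f' (A α) (A αstar)
  set q := Ng (α - αstar) ^ 2
  have hadj : ∀ (z : Euc d) (u : Euc n),
      ⟪(ContinuousLinearMap.adjoint A) z, u⟫ = ⟪z, A u⟫ :=
    fun z u => ContinuousLinearMap.adjoint_inner_left A u z
  have hDf : 0 ≤ Df := bregman_nonneg hfc hf' _ _
  have hK : ∀ e, ⟪-(ContinuousLinearMap.adjoint A) w - -(ContinuousLinearMap.adjoint A) ws, e⟫ ^ 2
      ≤ 2 * σ * Df / β * Ng e ^ 2 := fun e => by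
    rw [show -(ContinuousLinearMap.adjoint A) w - -(ContinuousLinearMap.adjoint A) ws
        = -(ContinuousLinearMap.adjoint A) (w - ws) by rw [map_sub]; abel, inner_neg_left, neg_sq]
    exact sq_inner_adjoint_sub_le_bregman hNf hfc hf' hβ hsmooth hσA _ _ e
  have hconj := econj_le_of_quadratic_minorant hμ (by positivity) hgs hsc hK
  have hα := hsc α
  rw [hgs, hga, ← EReal.coe_add, EReal.coe_le_coe_iff, inner_neg_left, hadj, map_sub] at hα
  have hsm := hsmooth (A α) (A αstar)
  have hNfq : Nf (A αstar - A α) ^ 2 ≤ σ * q := by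
    rw [← map_sub, show αstar - α = (-1 : ℝ) • (α - αstar) by module, map_smul, hNf]
    simpa using hσA (α - αstar)
  have hlower : σ / (β * μ) * (Df + μ / 2 * q)
      ≤ σ / (β * μ) * (f (A α) + ga - (f (A αstar) + gs)) := by
    gcongr
    simp only [Df, bregman] at hα ⊢
    linarith
  have hsmq : 1 / (2 * β) * Nf (A αstar - A α) ^ 2 ≤ 1 / (2 * β) * (σ * q) := by gcongr
  have hsplit : 2 * σ * Df / β / (2 * μ) + 1 / (2 * β) * (σ * q)
      = σ / (β * μ) * (Df + μ / 2 * q) := by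
    field_simp
  unfold dualityGap
  calc _ ≤ ((⟪-(ContinuousLinearMap.adjoint A) w, αstar⟫ - gs + 2 * σ * Df / β / (2 * μ) : ℝ)
        : EReal) + (ga : EReal) + (⟪w, A α⟫ : ℝ) := by
        rw [hga]; gcongr
    _ = ((⟪-(ContinuousLinearMap.adjoint A) w, αstar⟫ - gs + 2 * σ * Df / β / (2 * μ) + ga
        + ⟪w, A α⟫ : ℝ) : EReal) := by norm_cast
    _ ≤ _ := by
        rw [EReal.coe_le_coe_iff, inner_neg_left, hadj]
        rw [inner_sub_right] at hsm
        linarith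

end Composite

theorem toe_coe (r : ℝ) : toe r = ENNReal.ofReal r := by
  simp [toe]

theorem toe_le_ofReal {x : EReal} {r : ℝ} (h : x ≤ r) : toe x ≤ ENNReal.ofReal r := by
  induction x using EReal.rec with
  | bot => simp [toe]
  | coe y => exact (toe_coe y).trans_le (ENNReal.ofReal_le_ofReal (EReal.coe_le_coe_iff.1 h))
  | top => simp at h

theorem toe_dualityGap_le {d n : ℕ} (A : Euc n →L[ℝ] Euc d)
    (Nf : Euc d → ℝ) (hNf : IsNorm Nf) (Ng : Euc n → ℝ)
    (f : Euc d → ℝ) (hfc : ConvexOn ℝ univ f)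
    (f' : Euc d → Euc d) (hf' : ∀ x, HasGradientAt f (f' x) x)
    (β : ℝ) (hβ : 0 < β)
    (hsmooth : ∀ x y, f y ≤ f x + ⟪f' x, y - x⟫ + 1 / (2 * β) * Nf (y - x) ^ 2)
    (g : Euc n → EReal) (hg : EProper g) (hgc : EConvex g)
    (μ : ℝ) (hμ : 0 < μ)
    (hgsc : ∀ x u, ESubgradAt g x u → ∀ y,
        g x + ((⟪u, y - x⟫ + μ / 2 * Ng (y - x) ^ 2 : ℝ) : EReal) ≤ g y)
    (σ : ℝ) (hσ0 : 0 ≤ σ) (hσA : ∀ x, Nf (A x) ^ 2 ≤ σ * Ng x ^ 2)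
    (αstar : Euc n) (hstar : ∀ α, objective A f g αstar ≤ objective A f g α) (α : Euc n) :
    toe (dualityGap A f' g α) ≤
      ENNReal.ofReal (1 + σ / (β * μ)) * toe (objective A f g α - objective A f g αstar) := by
  have hsub : ESubgradAt g αstar (-(ContinuousLinearMap.adjoint A) (f' (A αstar))) := by
    refine esubgradAt_neg_of_isMinimizer hg hgc (F := fun α => f (A α))
      (K := fun e => 1 / (2 * β) * Nf (A e) ^ 2) hstar fun e s => ?_
    have := hsmooth (A αstar) (A (αstar + s • e))
    rwa [show A (αstar + s • e) - A αstar = s • A e by rw [map_add, map_smul, add_sub_cancel_left],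
      inner_smul_right, ← ContinuousLinearMap.adjoint_inner_left, hNf.2.2.1, mul_pow, sq_abs,
      show 1 / (2 * β) * (s ^ 2 * Nf (A e) ^ 2) = s ^ 2 * (1 / (2 * β) * Nf (A e) ^ 2) by ring]
      at this
  obtain ⟨gs, hgs⟩ := hg.exists_coe_eq (hg.ne_top_of_isMinimizer (F := fun α => f (A α)) hstar)
  by_cases hα : g α = ⊤
  · have hκ : ENNReal.ofReal (1 + σ / (β * μ)) ≠ 0 := by
      rw [ENNReal.ofReal_ne_zero_iff]; positivity
    have hdiff : objective A f g α - objective A f g αstar = ⊤ := by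
      rw [objective, objective, hα, hgs, EReal.coe_add_top, ← EReal.coe_add, EReal.top_sub_coe]
    simp [hdiff, toe, ENNReal.mul_top hκ]
  obtain ⟨ga, hga⟩ := hg.exists_coe_eq hα
  have hdiff : objective A f g α - objective A f g αstar
      = ((f (A α) + ga - (f (A αstar) + gs) : ℝ) : EReal) := by
    simp only [objective, hga, hgs]; norm_cast
  rw [hdiff, toe_coe, ← ENNReal.ofReal_mul (by positivity)]
  exact toe_le_ofReal
    (dualityGap_le hNf.2.2.1 hfc hf' hβ hsmooth hμ hσ0 hσA hgs (hgsc _ _ hsub) hga)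

theorem stmt9_general {d n : ℕ} (A : Euc n →L[ℝ] Euc d)
    (Nf : Euc d → ℝ) (hNf : IsNorm Nf) (Ng : Euc n → ℝ)
    (f : Euc d → ℝ) (hfc : ConvexOn ℝ Set.univ f)
    (f' : Euc d → Euc d) (hf' : ∀ x, HasGradientAt f (f' x) x)
    (β : ℝ) (hβ : 0 < β)
    (hsmooth : ∀ x y, f y ≤ f x + (inner ℝ (f' x) (y - x) : ℝ)
        + 1 / (2 * β) * (Nf (y - x)) ^ 2)
    (g : Euc n → EReal) (hg : EProper g) (hgc : EConvex g)
    (μ : ℝ) (hμ : 0 < μ)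
    (hgsc : ∀ x u, ESubgradAt g x u → ∀ y,
        g x + (((inner ℝ u (y - x) : ℝ) + μ / 2 * (Ng (y - x)) ^ 2 : ℝ) : EReal) ≤ g y)
    (σ : ℝ) (hσ0 : 0 ≤ σ) (hσA : ∀ x, (Nf (A x)) ^ 2 ≤ σ * (Ng x) ^ 2)
    (αstar : Euc n)
    (hstar : ∀ α : Euc n,
        ((f (A αstar) : ℝ) : EReal) + g αstar ≤ ((f (A α) : ℝ) : EReal) + g α)
    {Ω : Type} [MeasurableSpace Ω] (P : Measure Ω)
    (a : ℕ → Ω → Euc n)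
    (C D₀ : ℝ) (hC0 : 0 < C) (hC1 : C ≤ 1)
    (hrate : ∀ t : ℕ,
      ∫⁻ ω, toe ((((f (A (a t ω)) : ℝ) : EReal) + g (a t ω))
          - (((f (A αstar) : ℝ) : EReal) + g αstar)) ∂P
        ≤ ENNReal.ofReal ((1 - C) ^ t * D₀))
    (ε : ℝ) (hε : 0 < ε) (t : ℕ)
    (ht : 1 / C * Real.log (D₀ * (σ / β + μ) / (μ * ε)) ≤ (t : ℝ)) :
    ∫⁻ ω, toe (econj g (-(ContinuousLinearMap.adjoint A) (f' (A (a t ω)))) + g (a t ω)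
        + ((inner ℝ (f' (A (a t ω))) (A (a t ω)) : ℝ) : EReal)) ∂P
      ≤ ENNReal.ofReal ε := by
  set κ := 1 + σ / (β * μ)
  have hκ : D₀ * (σ / β + μ) / (μ * ε) = κ * D₀ / ε := by
    simp only [κ]; field_simp; ring
  calc ∫⁻ ω, toe (dualityGap A f' g (a t ω)) ∂P
      ≤ ∫⁻ ω, ENNReal.ofReal κ * toe (objective A f g (a t ω) - objective A f g αstar) ∂P :=
        lintegral_mono fun ω => toe_dualityGap_le A Nf hNf Ng f hfc f' hf' β hβ hsmooth g hg hgc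
          μ hμ hgsc σ hσ0 hσA αstar hstar (a t ω)
    _ = ENNReal.ofReal κ * ∫⁻ ω, toe (objective A f g (a t ω) - objective A f g αstar) ∂P :=
        lintegral_const_mul' _ _ ENNReal.ofReal_ne_top
    _ ≤ ENNReal.ofReal κ * ENNReal.ofReal ((1 - C) ^ t * D₀) := by gcongr; exact hrate t
    _ = ENNReal.ofReal ((1 - C) ^ t * (κ * D₀)) := by
        rw [← ENNReal.ofReal_mul (by positivity)]; ring_nf
    _ ≤ ENNReal.ofReal ε := by
        rw [hκ] at ht
        exact ENNReal.ofReal_le_ofReal (one_sub_pow_mul_le_of_log_div_le hC0 hC1 hε ht)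

/-- linear rate transfer, strongly convex case: if an algorithm's (random)
iterates satisfy `E[D(α^t) - D(α⋆)] ≤ (1-C)^t D₀`, then for every
`t ≥ (1/C) log(D₀(σ/β + μ)/(μ ε))` one has `E[G(α^t)] ≤ ε`. -/
theorem stmt9 {d n : ℕ} (A : Euc n →L[ℝ] Euc d)
    (Nf : Euc d → ℝ) (hNf : IsNorm Nf) (Ng : Euc n → ℝ) (hNg : IsNorm Ng)
    (f : Euc d → ℝ) (hfc : ConvexOn ℝ Set.univ f)
    (f' : Euc d → Euc d) (hf' : ∀ x, HasGradientAt f (f' x) x)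
    (β : ℝ) (hβ : 0 < β)
    (hsmooth : ∀ x y, f y ≤ f x + (inner ℝ (f' x) (y - x) : ℝ)
        + 1 / (2 * β) * (Nf (y - x)) ^ 2)
    (g : Euc n → EReal) (hg : EProper g) (hgc : EConvex g)
    (μ : ℝ) (hμ : 0 < μ)
    (hgsc : ∀ x u, ESubgradAt g x u → ∀ y,
        g x + (((inner ℝ u (y - x) : ℝ) + μ / 2 * (Ng (y - x)) ^ 2 : ℝ) : EReal) ≤ g y)
    (σ : ℝ) (hσ0 : 0 ≤ σ) (hσA : ∀ x, (Nf (A x)) ^ 2 ≤ σ * (Ng x) ^ 2)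
    (αstar : Euc n)
    (hstar : ∀ α : Euc n,
        ((f (A αstar) : ℝ) : EReal) + g αstar ≤ ((f (A α) : ℝ) : EReal) + g α)
    {Ω : Type} [MeasurableSpace Ω] (P : Measure Ω) [IsProbabilityMeasure P]
    (a : ℕ → Ω → Euc n)
    (C D₀ : ℝ) (hC0 : 0 < C) (hC1 : C ≤ 1) (hD0 : 0 ≤ D₀)
    (hrate : ∀ t : ℕ,
      ∫⁻ ω, toe ((((f (A (a t ω)) : ℝ) : EReal) + g (a t ω))
          - (((f (A αstar) : ℝ) : EReal) + g αstar)) ∂P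
        ≤ ENNReal.ofReal ((1 - C) ^ t * D₀))
    (ε : ℝ) (hε : 0 < ε) (t : ℕ)
    (ht : 1 / C * Real.log (D₀ * (σ / β + μ) / (μ * ε)) ≤ (t : ℝ)) :
    ∫⁻ ω, toe (econj g (-(ContinuousLinearMap.adjoint A) (f' (A (a t ω)))) + g (a t ω)
        + ((inner ℝ (f' (A (a t ω))) (A (a t ω)) : ℝ) : EReal)) ∂P
      ≤ ENNReal.ofReal ε :=
  stmt9_general A Nf hNf Ng f hfc f' hf' β hβ hsmooth g hg hgc μ hμ hgsc σ hσ0 hσA αstar hstar P a C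
    D₀ hC0 hC1 hrate ε hε t ht
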